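/- arXiv:1603.04172 — 2 statements merged into one kernel-verified Lean document; each statement's English description precedes it below -/
import Mathlib

section
/- Strong duality in the unclipped regime: if D > 0 satisfies D/p ≤ λ_{t,i} для all t ∈ {0,…,n} and i ∈ {1,…,p} — that is, the water level ξ = D/p does not exceed any eigenvalue — then the minimum of (1/(2(n+1))) Σ_{t=0}^{n} Σ_{i=1}^{p} max{0, log(λ_{t,i}/δ_{t,i})} over all δ_{t,i} > 0 with (1/(n+1)) Σ_{t,i} δ_{t,i} = D equals (1/(2(n+1))) Σ_{t=0}^{n} Σ_{i=1}^{p} log(p·λ_{t,i}/D), and it is attained at δ_{t,i} = D/p for all t,i. -/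
open Finset Real

/-- Strong duality in the unclipped regime: if the water level `D/p` does not
exceed any eigenvalue, then the minimum of the rate objective over feasible
allocations equals `(1/(2(n+1))) Σ_{t,i} log(p·λ_{t,i}/D)`, attained at the
constant allocation `δ_{t,i} = D/p`. -/
theorem strong_duality_unclipped
    (n p : ℕ) (hp : 0 < p)
    (lam : Fin (n + 1) → Fin p → ℝ) (hlam : ∀ t i, 0 < lam t i)
    (D : ℝ) (hD : 0 < D) (hle : ∀ t i, D / p ≤ lam t i) :
    IsLeast
      {r : ℝ | ∃ δ : Fin (n + 1) → Fin p → ℝ, (∀ t i, 0 < δ t i) ∧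
        (1 / (n + 1 : ℝ)) * ∑ t, ∑ i, δ t i = D ∧
        r = (1 / (2 * (n + 1) : ℝ)) * ∑ t, ∑ i, max 0 (Real.log (lam t i / δ t i))}
      ((1 / (2 * (n + 1) : ℝ)) * ∑ t, ∑ i, Real.log (p * lam t i / D)) ∧
    (1 / (n + 1 : ℝ)) * (∑ t : Fin (n + 1), ∑ i : Fin p, D / p) = D ∧
    (1 / (2 * (n + 1) : ℝ)) * ∑ t, ∑ i, max 0 (Real.log (lam t i / (D / p)))
      = (1 / (2 * (n + 1) : ℝ)) * ∑ t, ∑ i, Real.log (p * lam t i / D) := by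
  have hn1 : (0:ℝ) < (n:ℝ) + 1 := by positivity
  have hpR : (0:ℝ) < (p:ℝ) := by exact_mod_cast hp
  have hξ : 0 < D / (p:ℝ) := div_pos hD hpR
  have hkey : ∀ t i, lam t i / (D / p) = p * lam t i / D := by
    intro t i; field_simp
  have hmaxeq : ∀ t i, max 0 (Real.log (lam t i / (D / p))) = Real.log (p * lam t i / D) := by
    intro t i
    rw [max_eq_right, hkey]
    apply Real.log_nonneg
    rw [le_div_iff₀ hξ]; simpa using hle t i
  have hsum_eq : ∑ t, ∑ i, max 0 (Real.log (lam t i / (D / p)))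
      = ∑ t, ∑ i, Real.log (p * lam t i / D) :=
    Finset.sum_congr rfl fun t _ => Finset.sum_congr rfl fun i _ => hmaxeq t i
  have hconstraint : (1 / (n + 1 : ℝ)) * (∑ t : Fin (n+1), ∑ i : Fin p, D / p) = D := by
    simp [Finset.sum_const, Finset.card_univ]
    field_simp
  refine ⟨⟨⟨fun _ _ => D / p, fun _ _ => hξ, hconstraint, by rw [hsum_eq]⟩, ?_⟩,
    hconstraint, by rw [hsum_eq]⟩
  rintro r ⟨δ, hδpos, hδsum, rfl⟩
  have hNp : ∑ t, ∑ i, δ t i = ((n:ℝ)+1) * D := by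
    field_simp at hδsum; linarith
  have hpt : ∀ t i, Real.log (p * lam t i / D) - (δ t i / (D / p) - 1)
      ≤ max 0 (Real.log (lam t i / δ t i)) := by
    intro t i
    have h1 : Real.log (δ t i / (D / p)) ≤ δ t i / (D / p) - 1 :=
      Real.log_le_sub_one_of_pos (div_pos (hδpos t i) hξ)
    have h2 : Real.log (δ t i / (D / p)) = Real.log (δ t i) - Real.log (D / p) :=
      Real.log_div (ne_of_gt (hδpos t i)) (ne_of_gt hξ)
    have h3 : Real.log (lam t i / δ t i) = Real.log (lam t i) - Real.log (δ t i) :=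
      Real.log_div (ne_of_gt (hlam t i)) (ne_of_gt (hδpos t i))
    have h4 : Real.log (p * lam t i / D) = Real.log (lam t i) - Real.log (D / p) := by
      rw [← hkey, Real.log_div (ne_of_gt (hlam t i)) (ne_of_gt hξ)]
    have h5 := le_max_right (0:ℝ) (Real.log (lam t i / δ t i))
    linarith
  have hsumle : ∑ t, ∑ i, Real.log (p * lam t i / D)
      ≤ ∑ t, ∑ i, max 0 (Real.log (lam t i / δ t i)) := by
    have h1 : ∑ t, ∑ i, (Real.log (p * lam t i / D) - (δ t i / (D / p) - 1))
        ≤ ∑ t, ∑ i, max 0 (Real.log (lam t i / δ t i)) :=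
      Finset.sum_le_sum fun t _ => Finset.sum_le_sum fun i _ => hpt t i
    have h2 : ∑ t, ∑ i, (Real.log (p * lam t i / D) - (δ t i / (D / p) - 1))
        = ∑ t, ∑ i, Real.log (p * lam t i / D)
          - ((∑ t, ∑ i, δ t i) / (D / p) - ((n:ℝ)+1) * p) := by
      simp [Finset.sum_sub_distrib, ← Finset.sum_div, Finset.sum_const, Finset.card_univ]
    have h3 : ((n:ℝ)+1) * D / (D / p) = ((n:ℝ)+1) * p := by
      field_simp
    rw [h2, hNp, h3] at h1
    linarith
  have hpos : (0:ℝ) ≤ 1 / (2 * ((n:ℝ) + 1)) := by positivity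
  calc (1 / (2 * ((n:ℝ) + 1))) * ∑ t, ∑ i, Real.log (p * lam t i / D)
      ≤ (1 / (2 * ((n:ℝ) + 1))) * ∑ t, ∑ i, max 0 (Real.log (lam t i / δ t i)) :=
        mul_le_mul_of_nonneg_left hsumle hpos
end

section
/- Riccati recursion simplification (equation (4.14) of Theorem 4): assume additionally δ_i < λ_i for all i (so H is invertible), and set Π := EᵀΛE and M := EᵀHΛE. Then for any real p×p matrix A and any real p×k matrix B, A Π Aᵀ − A Π (EᵀHE)ᵀ M⁻¹ (EᵀHE) Π Aᵀ + B Bᵀ = A EᵀΔE Aᵀ + B Bᵀ. -/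
open Matrix

/-- Riccati recursion simplification: assuming `δ_i < λ_i` for all `i` (so `H`
is invertible), with `Π := EᵀΛE` and `M := EᵀHΛE` (for orthogonal `E`), for any
`A : p×p` and `B : p×k`,
`AΠAᵀ - AΠ(EᵀHE)ᵀ M⁻¹ (EᵀHE) Π Aᵀ + BBᵀ = A EᵀΔE Aᵀ + BBᵀ`. -/
theorem riccati_recursion_simplification
    (p k : ℕ) (lamv δv : Fin p → ℝ)
    (hδ : ∀ i, 0 < δv i) (hlt : ∀ i, δv i < lamv i)
    (Λ Δ H : Matrix (Fin p) (Fin p) ℝ)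
    (hΛ : Λ = Matrix.diagonal lamv) (hΔ : Δ = Matrix.diagonal δv)
    (hH : H = 1 - Δ * Λ⁻¹)
    (E : Matrix (Fin p) (Fin p) ℝ) (hE : Eᵀ * E = 1)
    (Pi M : Matrix (Fin p) (Fin p) ℝ)
    (hPi : Pi = Eᵀ * Λ * E) (hM : M = Eᵀ * H * Λ * E)
    (A : Matrix (Fin p) (Fin p) ℝ) (B : Matrix (Fin p) (Fin k) ℝ) :
    A * Pi * Aᵀ - A * Pi * (Eᵀ * H * E)ᵀ * M⁻¹ * (Eᵀ * H * E) * Pi * Aᵀ + B * Bᵀ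
      = A * (Eᵀ * Δ * E) * Aᵀ + B * Bᵀ := by
  have hlam0 : ∀ i, lamv i ≠ 0 := fun i => ((hδ i).trans (hlt i)).ne'
  have hd0 : ∀ i, lamv i - δv i ≠ 0 := fun i => sub_ne_zero.mpr (hlt i).ne'
  have hEE : E * Eᵀ = 1 := mul_eq_one_comm.mp hE
  have dext : ∀ f g : Fin p → ℝ, (∀ i, f i = g i) →
      Matrix.diagonal f = Matrix.diagonal g :=
    fun f g h => congrArg Matrix.diagonal (funext h)
  have hΛinv : Λ⁻¹ = Matrix.diagonal (fun i => (lamv i)⁻¹) := by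
    rw [hΛ]
    apply Matrix.inv_eq_right_inv
    rw [Matrix.diagonal_mul_diagonal, ← Matrix.diagonal_one]
    exact dext _ _ fun i => mul_inv_cancel₀ (hlam0 i)
  have hHdiag : H = Matrix.diagonal (fun i => 1 - δv i / lamv i) := by
    rw [hH, hΔ, hΛinv, Matrix.diagonal_mul_diagonal, ← Matrix.diagonal_one,
      Matrix.diagonal_sub]
    exact dext _ _ fun i => by rw [div_eq_mul_inv]
  set D : Matrix (Fin p) (Fin p) ℝ := Matrix.diagonal (fun i => lamv i - δv i) with hD
  have hHΛ : H * Λ = D := by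
    rw [hHdiag, hΛ, Matrix.diagonal_mul_diagonal, hD]
    exact dext _ _ fun i => by rw [sub_mul, one_mul, div_mul_cancel₀ _ (hlam0 i)]
  have hDinv : D⁻¹ = Matrix.diagonal (fun i => (lamv i - δv i)⁻¹) := by
    apply Matrix.inv_eq_right_inv
    rw [hD, Matrix.diagonal_mul_diagonal, ← Matrix.diagonal_one]
    exact dext _ _ fun i => mul_inv_cancel₀ (hd0 i)
  have hcancel : ∀ X : Matrix (Fin p) (Fin p) ℝ, E * (Eᵀ * X) = X := fun X => by
    rw [← Matrix.mul_assoc, hEE, Matrix.one_mul]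
  have hMinv : M⁻¹ = Eᵀ * D⁻¹ * E := by
    apply Matrix.inv_eq_right_inv
    have hMD : M = Eᵀ * D * E := by rw [hM, Matrix.mul_assoc Eᵀ H Λ, hHΛ]
    have hDD : D * D⁻¹ = 1 := by
      rw [hD, hDinv, Matrix.diagonal_mul_diagonal, ← Matrix.diagonal_one]
      exact dext _ _ fun i => mul_inv_cancel₀ (hd0 i)
    have h1 : Eᵀ * D * E * (Eᵀ * D⁻¹ * E) = Eᵀ * (D * D⁻¹) * E := by
      simp only [Matrix.mul_assoc, hcancel]
    rw [hMD, h1, hDD, Matrix.mul_one, hE]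
  have hHT : Hᵀ = H := by rw [hHdiag, Matrix.diagonal_transpose]
  have hdiagkey : Λ * H * D⁻¹ * H * Λ = Λ - Δ := by
    rw [hDinv, hΛ, hHdiag, hΔ]
    simp only [Matrix.diagonal_mul_diagonal, Matrix.diagonal_sub]
    refine dext _ _ fun i => ?_
    have h1 := hlam0 i
    have h2 := hd0 i
    field_simp
  have keyEq : Pi * (Eᵀ * H * E)ᵀ * M⁻¹ * (Eᵀ * H * E) * Pi = Pi - Eᵀ * Δ * E := by
    rw [hMinv, hPi, Matrix.transpose_mul, Matrix.transpose_mul, Matrix.transpose_transpose,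
      hHT]
    have h1 : Eᵀ * Λ * E * (Eᵀ * (H * E)) * (Eᵀ * D⁻¹ * E) * (Eᵀ * H * E) * (Eᵀ * Λ * E)
        = Eᵀ * (Λ * H * D⁻¹ * H * Λ) * E := by
      simp only [Matrix.mul_assoc, hcancel]
    rw [h1, hdiagkey, Matrix.mul_sub, Matrix.sub_mul]
  have hmain : A * Pi * (Eᵀ * H * E)ᵀ * M⁻¹ * (Eᵀ * H * E) * Pi * Aᵀ
      = A * Pi * Aᵀ - A * (Eᵀ * Δ * E) * Aᵀ := by
    have h2 : A * Pi * (Eᵀ * H * E)ᵀ * M⁻¹ * (Eᵀ * H * E) * Pi * Aᵀ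
        = A * (Pi * (Eᵀ * H * E)ᵀ * M⁻¹ * (Eᵀ * H * E) * Pi) * Aᵀ := by
      simp only [Matrix.mul_assoc]
    rw [h2, keyEq, Matrix.mul_sub, Matrix.sub_mul]
  rw [hmain]
  abel
end
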